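/- Let K be a field of characteristic 0 and a, b ∈ K× with neither a nor b a cube in K. Then a is a norm for the extension K(∛b)/K if and only if b is a norm for the extension K(∛a)/K. -/

import Mathlib

/-!
In the basis `1, ∛c, ∛c²` the norm of `K(∛c)/K` is the cubic form
`N_c(u, v, w) = u³ + c v³ + c² w³ - 3 c u v w`, so the theorem says that `N_b` represents `a`
iff `N_a` represents `b`. Given `N_b(x, y, z) = a`, an explicit polynomial point of `N_a` takes
the value `b² D³`, where `D = P² + P Q + Q²`, `P = y (y² - x z)`, `Q = z (b z² - x y)`.
If `D ≠ 0`, then `N_a` represents `b²`, hence `b`, because `N_a(s ξ) = s³ N_a(ξ)` and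
`N_a(adj ξ) = N_a(ξ)²` for the adjugate `adj ξ` (the coordinates of `N(ξ) / ξ`).
As `D` is the norm of `P - ω Q` from `K(ω)`, `ω` a primitive cube root of unity, and `P, Q`
cannot both vanish when `a, b` are not cubes, `D = 0` forces `ω = P / Q ∈ K`; then a second
explicit point has value `b ((1 - ω) Q)³`.
-/

open Polynomial

def cubicNormForm {K : Type*} [CommRing K] (c u v w : K) : K :=
  u ^ 3 + c * v ^ 3 + c ^ 2 * w ^ 3 - 3 * c * u * v * w

section Identities

variable {K : Type*} [CommRing K]

theorem cubicNormForm_smul (c t u v w : K) :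
    cubicNormForm c (t * u) (t * v) (t * w) = t ^ 3 * cubicNormForm c u v w := by
  unfold cubicNormForm; ring

theorem cubicNormForm_adjugate (c u v w : K) :
    cubicNormForm c (u ^ 2 - c * v * w) (c * w ^ 2 - u * v) (v ^ 2 - u * w) =
      cubicNormForm c u v w ^ 2 := by
  unfold cubicNormForm; ring

theorem cubicNormForm_cubicNormForm_eq_sq_mul_cube (b x y z : K) :
    cubicNormForm (cubicNormForm b x y z)
        (x^2*y^4 + b*y^5*z - 5*b*x*y^3*z^2 + 2*b*x^2*y*z^3 + 2*b^2*y^2*z^4 - b^2*x*z^5)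
        (-2*x*y^4 + 3*x^2*y^2*z + 2*b*y^3*z^2 - 4*b*x*y*z^3 + b^2*z^5)
        (y^4 - 3*x*y^2*z + 2*b*y*z^3) =
      b ^ 2 * ((y * (y ^ 2 - x * z)) ^ 2 + y * (y ^ 2 - x * z) * (z * (b * z ^ 2 - x * y)) +
        (z * (b * z ^ 2 - x * y)) ^ 2) ^ 3 := by
  unfold cubicNormForm; ring

theorem cubicNormForm_cubicNormForm_eq_mul_cube {m : K} (hm : m ^ 2 + m + 1 = 0) (b x y z : K) :
    cubicNormForm (cubicNormForm b x y z)
        (z * (x ^ 2 - b * y * z) + (1 + m) * (x * (y ^ 2 - x * z)))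
        (-((1 + m) * (y ^ 2 - x * z))) (-z) =
      b * (-((1 + m) * (y * (y ^ 2 - x * z))) - m * (z * (b * z ^ 2 - x * y))) ^ 3 := by
  unfold cubicNormForm
  linear_combination (b*x^3*y^3*z^3 + 2*b*x^3*y^3*z^3*m - 3*b*x^4*y*z^4*m + b^2*y^6*z^3
    + 2*b^2*y^6*z^3*m - 3*b^2*x*y^4*z^4 - 9*b^2*x*y^4*z^4*m + 9*b^2*x^2*y^2*z^5*m
    - b^2*x^3*z^6 + b^2*x^3*z^6*m + 3*b^3*y^3*z^6*m + 3*b^3*x*y*z^7 - 6*b^3*x*y*z^7*m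
    - b^4*z^9 + b^4*z^9*m) * hm

end Identities

section Representation

variable {K : Type*} [Field K]

theorem exists_cubicNormForm_eq_of_eq_mul_cube {c t s u v w : K} (hs : s ≠ 0)
    (h : cubicNormForm c u v w = t * s ^ 3) : ∃ u' v' w', cubicNormForm c u' v' w' = t :=
  ⟨s⁻¹ * u, s⁻¹ * v, s⁻¹ * w, by rw [cubicNormForm_smul, h]; field_simp⟩

theorem exists_cubicNormForm_eq_of_eq_sq {c t u v w : K} (ht : t ≠ 0)
    (h : cubicNormForm c u v w = t ^ 2) : ∃ u' v' w', cubicNormForm c u' v' w' = t :=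
  exists_cubicNormForm_eq_of_eq_mul_cube (s := t) ht
    (by rw [cubicNormForm_adjugate, h]; ring)

theorem eq_zero_and_eq_zero_of_not_cube {b x y z : K} (hb : ¬∃ t, t ^ 3 = b)
    (hP : y * (y ^ 2 - x * z) = 0) (hQ : z * (b * z ^ 2 - x * y) = 0) : y = 0 ∧ z = 0 := by
  by_cases hz : z = 0
  · subst hz
    exact ⟨pow_eq_zero_iff three_ne_zero |>.mp (by linear_combination hP), rfl⟩
  have hbz : b * z ^ 2 = x * y := by
    linear_combination (mul_eq_zero.mp hQ).resolve_left hz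
  by_cases hy : y = 0
  · subst hy
    simp only [mul_zero, mul_eq_zero, pow_eq_zero_iff two_ne_zero, hz, or_false] at hbz
    exact absurd ⟨0, by rw [hbz]; ring⟩ hb
  have hxz : y ^ 2 = x * z := by
    linear_combination (mul_eq_zero.mp hP).resolve_left hy
  exact absurd ⟨y / z, by field_simp; linear_combination y * hxz - z * hbz⟩ hb

theorem sq_add_self_add_one_eq_zero_of_sq_add_mul_add_sq_eq_zero {P Q : K} (hQ : Q ≠ 0)
    (h : P ^ 2 + P * Q + Q ^ 2 = 0) : (P / Q) ^ 2 + P / Q + 1 = 0 := by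
  field_simp; linear_combination h

theorem exists_cubicNormForm_eq_swap (h3 : (3 : K) ≠ 0) {a b x y z : K}
    (ha : ¬∃ t, t ^ 3 = a) (hb : ¬∃ t, t ^ 3 = b) (h : cubicNormForm b x y z = a) :
    ∃ u v w, cubicNormForm a u v w = b := by
  set P := y * (y ^ 2 - x * z)
  set Q := z * (b * z ^ 2 - x * y)
  have hPQ : ¬(P = 0 ∧ Q = 0) := by
    rintro ⟨hP0, hQ0⟩
    obtain ⟨rfl, rfl⟩ := eq_zero_and_eq_zero_of_not_cube hb hP0 hQ0
    exact ha ⟨x, by rw [← h]; unfold cubicNormForm; ring⟩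
  subst h
  by_cases hD : P ^ 2 + P * Q + Q ^ 2 = 0
  · have hQ0 : Q ≠ 0 := fun hQ0 => hPQ ⟨by simpa [hQ0] using hD, hQ0⟩
    set m := P / Q
    have hm : m ^ 2 + m + 1 = 0 :=
      sq_add_self_add_one_eq_zero_of_sq_add_mul_add_sq_eq_zero hQ0 hD
    have hm1 : 1 - m ≠ 0 := fun h => h3 (by linear_combination hm + (m + 2) * h)
    have hd : -((1 + m) * P) - m * Q = (1 - m) * Q := by
      rw [← div_mul_cancel₀ P hQ0]
      linear_combination (-Q) * hm
    have key := cubicNormForm_cubicNormForm_eq_mul_cube hm b x y z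
    rw [hd] at key
    exact exists_cubicNormForm_eq_of_eq_mul_cube (mul_ne_zero hm1 hQ0) key
  · obtain ⟨u, v, w, huvw⟩ := exists_cubicNormForm_eq_of_eq_mul_cube hD
      (cubicNormForm_cubicNormForm_eq_sq_mul_cube b x y z)
    exact exists_cubicNormForm_eq_of_eq_sq (fun hb0 => hb ⟨0, by simp [hb0]⟩) huvw

end Representation

section CubeRootExtension

variable {K L : Type*} [Field K] [Field L] [Algebra K L] {c : K} {r : L}

theorem minpoly_eq_X_pow_three_sub_C (hc : ¬∃ t, t ^ 3 = c) (hr : r ^ 3 = algebraMap K L c) :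
    minpoly K r = X ^ 3 - C c := by
  refine (minpoly.eq_of_irreducible_of_monic ?_ (by simp [hr])
    (monic_X_pow_sub_C c three_ne_zero)).symm
  exact X_pow_sub_C_irreducible_of_prime Nat.prime_three fun t ht => hc ⟨t, ht⟩

theorem isIntegral_of_pow_three_eq (hr : r ^ 3 = algebraMap K L c) : IsIntegral K r :=
  ⟨X ^ 3 - C c, monic_X_pow_sub_C c three_ne_zero, by simp [hr]⟩

noncomputable def cubeRootBasis (hc : ¬∃ t, t ^ 3 = c) (hr : r ^ 3 = algebraMap K L c)
    (hgen : Algebra.adjoin K {r} = ⊤) : Module.Basis (Fin 3) K L :=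
  (PowerBasis.ofAdjoinEqTop (isIntegral_of_pow_three_eq hr) hgen).basis.reindex
    (finCongr (by simp [minpoly_eq_X_pow_three_sub_C hc hr]))

theorem cubeRootBasis_apply (hc : ¬∃ t, t ^ 3 = c) (hr : r ^ 3 = algebraMap K L c)
    (hgen : Algebra.adjoin K {r} = ⊤) (i : Fin 3) :
    cubeRootBasis hc hr hgen i = r ^ (i : ℕ) := by
  rw [cubeRootBasis, Module.Basis.reindex_apply, PowerBasis.basis_eq_pow,
    PowerBasis.ofAdjoinEqTop_gen]
  rfl

theorem cubeRootBasis_repr (hc : ¬∃ t, t ^ 3 = c) (hr : r ^ 3 = algebraMap K L c)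
    (hgen : Algebra.adjoin K {r} = ⊤) (u v w : K) :
    ⇑((cubeRootBasis hc hr hgen).repr
        (algebraMap K L u + algebraMap K L v * r + algebraMap K L w * r ^ 2)) = ![u, v, w] := by
  rw [← (cubeRootBasis hc hr hgen).repr_sum_self ![u, v, w]]
  congr 1
  simp [Fin.sum_univ_three, cubeRootBasis_apply, Algebra.smul_def]

theorem exists_eq_add_mul_add_mul_sq (hc : ¬∃ t, t ^ 3 = c) (hr : r ^ 3 = algebraMap K L c)
    (hgen : Algebra.adjoin K {r} = ⊤) (ξ : L) :
    ∃ u v w : K, algebraMap K L u + algebraMap K L v * r + algebraMap K L w * r ^ 2 = ξ := by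
  have := (cubeRootBasis hc hr hgen).sum_repr ξ
  simp only [Fin.sum_univ_three, cubeRootBasis_apply, Algebra.smul_def] at this
  exact ⟨_, _, _, by simpa using this⟩

theorem norm_add_mul_add_mul_sq (hc : ¬∃ t, t ^ 3 = c) (hr : r ^ 3 = algebraMap K L c)
    (hgen : Algebra.adjoin K {r} = ⊤) (u v w : K) :
    Algebra.norm K (algebraMap K L u + algebraMap K L v * r + algebraMap K L w * r ^ 2) =
      cubicNormForm c u v w := by
  set B := cubeRootBasis hc hr hgen
  obtain ⟨ξ, hξ⟩ :
      ∃ ξ, ξ = algebraMap K L u + algebraMap K L v * r + algebraMap K L w * r ^ 2 :=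
    ⟨_, rfl⟩
  rw [← hξ]
  have h0 : ⇑(B.repr (ξ * r ^ 0)) = ![u, v, w] := by
    rw [pow_zero, mul_one, hξ, cubeRootBasis_repr]
  have h1 : ⇑(B.repr (ξ * r ^ 1)) = ![c * w, u, v] := by
    rw [← cubeRootBasis_repr hc hr hgen]
    congr 2
    rw [hξ, map_mul (algebraMap K L)]
    linear_combination algebraMap K L w * hr
  have h2 : ⇑(B.repr (ξ * r ^ 2)) = ![c * v, c * w, u] := by
    rw [← cubeRootBasis_repr hc hr hgen]
    congr 2
    rw [hξ, map_mul (algebraMap K L), map_mul (algebraMap K L)]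
    linear_combination (algebraMap K L v + algebraMap K L w * r) * hr
  have hmat : Algebra.leftMulMatrix B ξ = !![u, c * w, c * v; v, u, c * w; w, v, u] := by
    ext i j
    rw [Algebra.leftMulMatrix_eq_repr_mul, cubeRootBasis_apply]
    fin_cases j <;> [rw [h0]; rw [h1]; rw [h2]] <;> fin_cases i <;> rfl
  rw [Algebra.norm_eq_matrix_det B, hmat, Matrix.det_fin_three]
  simp only [cubicNormForm, Matrix.of_apply, Matrix.cons_val', Matrix.cons_val_zero,
    Matrix.cons_val_one, Matrix.cons_val_two, Matrix.head_cons, Matrix.tail_cons,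
    Matrix.empty_val', Matrix.cons_val_fin_one, Matrix.head_fin_const]
  ring

theorem exists_norm_eq_iff_exists_cubicNormForm_eq (hc : ¬∃ t, t ^ 3 = c)
    (hr : r ^ 3 = algebraMap K L c) (hgen : Algebra.adjoin K {r} = ⊤) (t : K) :
    (∃ ξ : L, Algebra.norm K ξ = t) ↔ ∃ u v w, cubicNormForm c u v w = t := by
  constructor
  · rintro ⟨ξ, rfl⟩
    obtain ⟨u, v, w, rfl⟩ := exists_eq_add_mul_add_mul_sq hc hr hgen ξ
    exact ⟨u, v, w, (norm_add_mul_add_mul_sq hc hr hgen u v w).symm⟩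
  · rintro ⟨u, v, w, rfl⟩
    exact ⟨_, norm_add_mul_add_mul_sq hc hr hgen u v w⟩

end CubeRootExtension

theorem stmt_2_general (K : Type*) [Field K] [CharZero K]
    (a b : K)
    (ha : ¬ ∃ c : K, c ^ 3 = a) (hb : ¬ ∃ c : K, c ^ 3 = b)
    (La Lb : Type*) [Field La] [Algebra K La]
    [Field Lb] [Algebra K Lb]
    (ra : La) (hra : ra ^ 3 = algebraMap K La a)
    (hgena : Algebra.adjoin K {ra} = ⊤)
    (rb : Lb) (hrb : rb ^ 3 = algebraMap K Lb b)
    (hgenb : Algebra.adjoin K {rb} = ⊤) :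
    (∃ ξ : Lb, Algebra.norm K ξ = a) ↔ (∃ ξ : La, Algebra.norm K ξ = b) := by
  rw [exists_norm_eq_iff_exists_cubicNormForm_eq hb hrb hgenb,
    exists_norm_eq_iff_exists_cubicNormForm_eq ha hra hgena]
  exact ⟨fun ⟨_, _, _, h⟩ => exists_cubicNormForm_eq_swap three_ne_zero ha hb h,
    fun ⟨_, _, _, h⟩ => exists_cubicNormForm_eq_swap three_ne_zero hb ha h⟩

/-- For non-cubes `a, b ∈ K×`, `a` is a norm for `K(∛b)/K` iff `b` is a norm
for `K(∛a)/K`. -/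
theorem stmt_2 (K : Type*) [Field K] [CharZero K]
    (a b : K) (ha0 : a ≠ 0) (hb0 : b ≠ 0)
    (ha : ¬ ∃ c : K, c ^ 3 = a) (hb : ¬ ∃ c : K, c ^ 3 = b)
    (La Lb : Type*) [Field La] [Algebra K La] [FiniteDimensional K La]
    [Field Lb] [Algebra K Lb] [FiniteDimensional K Lb]
    (ra : La) (hra : ra ^ 3 = algebraMap K La a)
    (hgena : Algebra.adjoin K {ra} = ⊤)
    (rb : Lb) (hrb : rb ^ 3 = algebraMap K Lb b)
    (hgenb : Algebra.adjoin K {rb} = ⊤) :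
    (∃ ξ : Lb, Algebra.norm K ξ = a) ↔ (∃ ξ : La, Algebra.norm K ξ = b) :=
  stmt_2_general K a b ha hb La Lb ra hra hgena rb hrb hgenb
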